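/- arXiv:2605.22146 — 3 statements merged into one kernel-verified Lean document; each statement's English description precedes it below -/
import Mathlib

section
/- Let f be a C¹-smooth stationary Gaussian process with covariance kernel K and a spectral density. Then for every k ∈ ℕ and every injective tuple of points x₁, …, x_k ∈ ℝ, the Gaussian vector (f(x₁), …, f(x_k), f′(x₁), …, f′(x_k)) is non-degenerate; equivalently, the 2k × 2k symmetric matrix M with block entries M_{ij} = K(xᵢ − xⱼ), M_{i,k+j} = −K′(xᵢ − xⱼ), M_{k+i,j} = K′(xᵢ − xⱼ), and M_{k+i,k+j} = −K″(xᵢ − xⱼ) (for 1 ≤ i, j ≤ k) is positive definite. -/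
open MeasureTheory ProbabilityTheory Set Filter

noncomputable section

/-- A `C^m`-smooth stationary Gaussian process with covariance kernel `K`,
on a probability space `(Ω, P)`. -/
def IsSGP {Ω : Type*} [MeasurableSpace Ω] (P : Measure Ω) (m : ℕ)
    (f : Ω → ℝ → ℝ) (K : ℝ → ℝ) : Prop :=
  (∀ ω, ContDiff ℝ m (f ω)) ∧
  (∀ x y : ℝ, Integrable (fun ω => f ω x * f ω y) P) ∧
  (∀ x y : ℝ, (∫ ω, f ω x * f ω y ∂P) = K (x - y)) ∧
  (∀ (n : ℕ) (x a : Fin n → ℝ),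
    Measure.map (fun ω => ∑ i, a i * f ω (x i)) P =
      gaussianReal 0 (∑ i, ∑ j, a i * a j * K (x i - x j)).toNNReal) ∧
  0 < K 0

/-- A stationary Gaussian process with continuous sample paths and covariance kernel `K`. -/
def IsSGPCont {Ω : Type*} [MeasurableSpace Ω] (P : Measure Ω)
    (f : Ω → ℝ → ℝ) (K : ℝ → ℝ) : Prop :=
  (∀ ω, Continuous (f ω)) ∧
  (∀ x y : ℝ, Integrable (fun ω => f ω x * f ω y) P) ∧
  (∀ x y : ℝ, (∫ ω, f ω x * f ω y ∂P) = K (x - y)) ∧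
  (∀ (n : ℕ) (x a : Fin n → ℝ),
    Measure.map (fun ω => ∑ i, a i * f ω (x i)) P =
      gaussianReal 0 (∑ i, ∑ j, a i * a j * K (x i - x j)).toNNReal) ∧
  0 < K 0

/-- `K` is the Fourier transform of a nonnegative even integrable spectral density `ρ`,
with `s ^ (2m) * ρ s` integrable. -/
def HasSpectralDensity (m : ℕ) (K : ℝ → ℝ) : Prop :=
  ∃ ρ : ℝ → ℝ, (∀ s, 0 ≤ ρ s) ∧ (∀ s, ρ (-s) = ρ s) ∧
    Integrable ρ ∧ (∀ x, K x = ∫ s, Real.cos (x * s) * ρ s) ∧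
    Integrable (fun s => s ^ (2 * m) * ρ s)

/-- The gap event: `f` has no zero in `I`. -/
def GapEvent {Ω : Type*} (f : Ω → ℝ → ℝ) (I : Set ℝ) : Set Ω :=
  {ω | ∀ x ∈ I, f ω x ≠ 0}

/-- The gap probability `G(r) = P[no zero in [0,r]]`. -/
def gapProb {Ω : Type*} [MeasurableSpace Ω] (P : Measure Ω)
    (f : Ω → ℝ → ℝ) (r : ℝ) : ℝ :=
  (P (GapEvent f (Set.Icc 0 r))).toReal

/-- The scaling function `θ(r) = -log(-G'(r))`. -/
def scalingTheta {Ω : Type*} [MeasurableSpace Ω] (P : Measure Ω)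
    (f : Ω → ℝ → ℝ) (r : ℝ) : ℝ :=
  -Real.log (-(deriv (gapProb P f) r))

/-- The next zero of `g` strictly after `z`. -/
def nextZero (g : ℝ → ℝ) (z : ℝ) : ℝ := sInf {y : ℝ | z < y ∧ g y = 0}

/-- The largest gap between successive zeros of `g` starting in `[0, R]`
(equal to `0` if there is no zero, by the `sSup ∅ = 0` convention). -/
def largestGap (g : ℝ → ℝ) (R : ℝ) : ℝ :=
  sSup ((fun z => nextZero g z - z) '' {z | g z = 0 ∧ z ∈ Set.Icc 0 R})

/-- The location (left endpoint) of the largest gap in `[0, R]`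
(equal to `0` if there is no zero, by the `sInf ∅ = 0` convention). -/
def gapLocation (g : ℝ → ℝ) (R : ℝ) : ℝ :=
  sInf {z | g z = 0 ∧ z ∈ Set.Icc 0 R ∧ nextZero g z - z = largestGap g R}

/-- Super polynomial decay of correlations. -/
def InfPD (K : ℝ → ℝ) : Prop :=
  ∀ α : ℝ, 0 < α → Tendsto (fun x : ℝ => K x * x ^ α) atTop (nhds 0)

/-- Polynomial decay of correlations with exponent `α`: `K(x) ~ x⁻ᵅ`. -/
def AlphaPD (K : ℝ → ℝ) (α : ℝ) : Prop :=
  Tendsto (fun x : ℝ => K x * x ^ α) atTop (nhds 1)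

/-- `K̄(s) = sup_{x ≥ s} |K(x)|`. -/
def Kbar (K : ℝ → ℝ) (s : ℝ) : ℝ := sSup ((fun x => |K x|) '' Set.Ici s)

/-!
The spectral representation `K(d) = ∫ cos(d s) ρ(s) ds`, differentiated under the integral,
identifies the covariance matrix `M` with the Gram matrix, in `L²(ρ)`, of the complex features
`s ↦ e^{i xⱼ s}` and `s ↦ i s e^{i xⱼ s}`. Hence `vᵀ M v = ∫ |Ψ(s)|² ρ(s) ds` for `v = (a, b)`, with
`Ψ(s) = Σⱼ (aⱼ + i s bⱼ) e^{i xⱼ s}`. If this vanishes, `Ψ = 0` a.e. on `{ρ ≠ 0}`, a set of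
positive measure since `K(0) > 0`. As `Ψ` is real analytic, its zeros are countable unless
`Ψ ≡ 0` on `ℝ`; then `Ψ ≡ 0` on `ℂ`, and on the imaginary axis `Σⱼ (aⱼ + t bⱼ) e^{xⱼ t} = 0`,
which forces all coefficients to vanish because the term of largest frequency dominates as
`t → ∞`.
-/

open scoped RealInnerProductSpace

section ParametricIntegral

variable {μ : Measure ℝ} {φ φ' g : ℝ → ℝ}

theorem MeasureTheory.Integrable.id_mul_of_sq_mul (hg : Integrable g μ)
    (hg2 : Integrable (fun s => s ^ 2 * g s) μ) : Integrable (fun s => s * g s) μ := by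
  refine (hg.norm.add hg2.norm).mono' (continuous_id.aestronglyMeasurable.mul hg.1)
    (Eventually.of_forall fun s => ?_)
  have : |s| ≤ 1 + s ^ 2 := by nlinarith [sq_abs s, abs_nonneg s]
  simp only [Real.norm_eq_abs, abs_mul, abs_pow, sq_abs, Pi.add_apply]
  nlinarith [abs_nonneg (g s)]

theorem integrable_comp_mul_mul (hφ : Continuous φ) (hφb : ∀ u, |φ u| ≤ 1)
    (hg : Integrable g μ) (t : ℝ) : Integrable (fun s => φ (t * s) * g s) μ :=
  hg.bdd_mul (c := 1) (hφ.comp (continuous_const_mul t)).aestronglyMeasurable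
    (Eventually.of_forall fun _ => hφb _)

theorem hasDerivAt_integral_comp_mul_mul (hφ : ∀ u, HasDerivAt φ (φ' u) u)
    (hφ' : Continuous φ') (hφb : ∀ u, |φ u| ≤ 1) (hφ'b : ∀ u, |φ' u| ≤ 1)
    (hg : Integrable g μ) (hg' : Integrable (fun s => s * g s) μ) (t : ℝ) :
    HasDerivAt (fun t => ∫ s, φ (t * s) * g s ∂μ) (∫ s, φ' (t * s) * (s * g s) ∂μ) t := by
  have hφc : Continuous φ := continuous_iff_continuousAt.2 fun u => (hφ u).continuousAt
  refine (hasDerivAt_integral_of_dominated_loc_of_deriv_le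
    (F' := fun t s => φ' (t * s) * (s * g s)) (bound := fun s => ‖s * g s‖)
    univ_mem (Eventually.of_forall fun t => (integrable_comp_mul_mul hφc hφb hg t).1)
    (integrable_comp_mul_mul hφc hφb hg t) (integrable_comp_mul_mul hφ' hφ'b hg' t).1
    (Eventually.of_forall fun s t _ => ?_) hg'.norm (Eventually.of_forall fun s t _ => ?_)).2
  · rw [norm_mul, Real.norm_eq_abs]
    exact mul_le_of_le_one_left (norm_nonneg _) (hφ'b _)
  · exact (((hφ (t * s)).comp t (hasDerivAt_mul_const s)).mul_const (g s)).congr_deriv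
      (by ring)

end ParametricIntegral

section SpectralKernel

open Real

variable {ρ K : ℝ → ℝ} (hρ : Integrable ρ) (hρ2 : Integrable fun s => s ^ 2 * ρ s)
  (hK : ∀ d, K d = ∫ s, cos (d * s) * ρ s)
include hρ hρ2 hK

theorem hasDerivAt_of_eq_integral_cos (d : ℝ) :
    HasDerivAt K (∫ s, -sin (d * s) * (s * ρ s)) d := by
  rw [show K = _ from funext hK]
  exact hasDerivAt_integral_comp_mul_mul hasDerivAt_cos continuous_sin.neg abs_cos_le_one
    (fun u => (abs_neg (sin u)).trans_le (abs_sin_le_one u)) hρ (hρ.id_mul_of_sq_mul hρ2) d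

theorem hasDerivAt_deriv_of_eq_integral_cos (d : ℝ) :
    HasDerivAt (deriv K) (∫ s, -cos (d * s) * (s * (s * ρ s))) d := by
  rw [show deriv K = _ from funext fun d => (hasDerivAt_of_eq_integral_cos hρ hρ2 hK d).deriv]
  exact hasDerivAt_integral_comp_mul_mul (φ := fun u => -sin u) (fun u => (hasDerivAt_sin u).neg)
    continuous_cos.neg (fun u => (abs_neg (sin u)).trans_le (abs_sin_le_one u))
    (fun u => (abs_neg (cos u)).trans_le (abs_cos_le_one u)) (hρ.id_mul_of_sq_mul hρ2)
    (by simpa only [← mul_assoc, ← pow_two] using hρ2) d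

end SpectralKernel

theorem AnalyticOnNhd.ae_ne_zero {E : Type*} [NormedAddCommGroup E] [NormedSpace ℝ E]
    {μ : Measure ℝ} [NullSingletonClass μ] {g : ℝ → E}
    (hg : AnalyticOnNhd ℝ g univ) (hne : g ≠ 0) : ∀ᵐ s ∂μ, g s ≠ 0 := by
  obtain ⟨s₀, hs₀⟩ := Function.ne_iff.1 hne
  have := ae_restrict_le_codiscreteWithin (μ := μ) MeasurableSet.univ
    (hg.preimage_zero_mem_codiscrete hs₀)
  rwa [Measure.restrict_univ] at this

section ExpPolynomial

theorem Real.tendsto_affine_mul_exp_atTop (a b : ℝ) {c : ℝ} (hc : c < 0) :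
    Tendsto (fun t => (a + t * b) * Real.exp (c * t)) atTop (nhds 0) := by
  have hexp : Tendsto (fun t => Real.exp (c * t)) atTop (nhds 0) :=
    Real.tendsto_exp_atBot.comp (tendsto_id.const_mul_atTop_of_neg hc)
  have hmul : Tendsto (fun t => t * Real.exp (c * t)) atTop (nhds 0) := by
    have := ((Real.tendsto_pow_mul_exp_neg_atTop_nhds_zero 1).comp
      (tendsto_id.const_mul_atTop (neg_pos.2 hc))).const_mul (-c⁻¹)
    rw [mul_zero] at this
    refine this.congr fun t => ?_
    simp only [Function.comp_apply, id, pow_one, neg_mul, neg_neg]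
    field_simp [hc.ne]
  convert (hexp.const_mul a).add (hmul.mul_const b) using 2 <;> ring

theorem eq_zero_of_tendsto_affine {a b : ℝ}
    (h : Tendsto (fun t => a + t * b) atTop (nhds 0)) : a = 0 ∧ b = 0 := by
  have hb : b = 0 := by
    have := (h.comp (tendsto_atTop_add_const_right atTop 1 tendsto_id)).sub h
    simp only [Function.comp_apply, sub_zero] at this
    exact tendsto_nhds_unique (tendsto_const_nhds.congr fun t => by simp only [id]; ring) this
  subst hb
  simpa using h

theorem eq_zero_of_sum_affine_mul_exp_eq_zero {ι : Type*} [Fintype ι] {x : ι → ℝ}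
    (hx : Function.Injective x) {a b : ι → ℝ}
    (h : ∀ t, ∑ j, (a j + t * b j) * Real.exp (x j * t) = 0) : a = 0 ∧ b = 0 := by
  classical
  by_contra hne
  set S := Finset.univ.filter fun j => a j ≠ 0 ∨ b j ≠ 0
  have hS : S.Nonempty := by
    by_contra hS
    simp only [Finset.not_nonempty_iff_eq_empty, Finset.filter_eq_empty_iff, Finset.mem_univ,
      true_implies, not_or, not_not, S] at hS
    exact hne ⟨funext fun j => (@hS j).1, funext fun j => (@hS j).2⟩
  obtain ⟨J, hJS, hJmax⟩ := S.exists_max_image x hS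
  have hsplit : ∀ t, a J + t * b J =
      -∑ j ∈ Finset.univ.erase J, (a j + t * b j) * Real.exp ((x j - x J) * t) := by
    intro t
    have h' : ∑ j, (a j + t * b j) * Real.exp ((x j - x J) * t) = 0 := by
      simp_rw [sub_mul, Real.exp_sub, ← mul_div_assoc, ← Finset.sum_div, h t, zero_div]
    rw [← Finset.add_sum_erase _ _ (Finset.mem_univ J), sub_self, zero_mul, Real.exp_zero,
      mul_one] at h'
    linarith
  have hrest : ∀ j ∈ Finset.univ.erase J,
      Tendsto (fun t => (a j + t * b j) * Real.exp ((x j - x J) * t)) atTop (nhds 0) := by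
    intro j hj
    by_cases hjS : j ∈ S
    · refine Real.tendsto_affine_mul_exp_atTop _ _ (sub_neg.2 ?_)
      exact (hJmax j hjS).lt_of_ne (hx.ne (Finset.ne_of_mem_erase hj))
    · simp only [Finset.mem_filter, Finset.mem_univ, true_and, not_or, not_not, S] at hjS
      simp [hjS.1, hjS.2]
  have hlim := (tendsto_finsetSum _ hrest).neg
  rw [Finset.sum_const_zero, neg_zero] at hlim
  have := eq_zero_of_tendsto_affine (hlim.congr fun t => (hsplit t).symm)
  simp only [Finset.mem_filter, Finset.mem_univ, true_and, S] at hJS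
  tauto

open Complex

variable {ι : Type*} [Fintype ι] (x a b : ι → ℝ)

def expSum (z : ℂ) : ℂ := ∑ j, (a j + z * b j * I) * cexp (x j * z * I)

theorem differentiable_expSum : Differentiable ℂ (expSum x a b) := by
  unfold expSum
  fun_prop

theorem analyticOnNhd_expSum_ofReal : AnalyticOnNhd ℝ (fun s : ℝ => expSum x a b s) univ :=
  (((differentiable_expSum x a b).contDiff.restrict_scalars ℝ).comp
    ofRealCLM.contDiff).analyticOnNhd

theorem expSum_neg_mul_I (t : ℝ) :
    expSum x a b (-t * I) = ↑(∑ j, (a j + t * b j) * Real.exp (x j * t)) := by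
  push_cast
  refine Finset.sum_congr rfl fun j _ => ?_
  ring_nf
  simp only [I_sq]
  ring_nf

variable {x a b}

theorem eq_zero_of_expSum_ofReal_eq_zero (hx : Function.Injective x)
    (h : ∀ s : ℝ, expSum x a b s = 0) : a = 0 ∧ b = 0 := by
  have hreal : ∃ᶠ z in nhdsWithin (0 : ℂ) {0}ᶜ, expSum x a b z = 0 :=
    (continuous_ofReal.continuousWithinAt.tendsto_nhdsWithin fun _ _ ↦ by simp_all).frequently
      (Frequently.of_forall (f := nhdsWithin (0 : ℝ) {0}ᶜ) h)
  have hzero := AnalyticOnNhd.eqOn_zero_of_preconnected_of_frequently_eq_zero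
    (fun z _ => (differentiable_expSum x a b).analyticAt z) isPreconnected_univ (mem_univ 0) hreal
  refine eq_zero_of_sum_affine_mul_exp_eq_zero hx fun t => ofReal_injective ?_
  rw [← expSum_neg_mul_I, hzero (mem_univ _), Pi.zero_apply, ofReal_zero]

theorem eq_zero_of_ae_expSum_eq_zero (hx : Function.Injective x) {μ : Measure ℝ}
    [NullSingletonClass μ] {w : ℝ → ℝ} (hw : ¬ w =ᵐ[μ] 0)
    (h : ∀ᵐ s ∂μ, w s ≠ 0 → expSum x a b s = 0) : a = 0 ∧ b = 0 := by
  by_cases h0 : (fun s : ℝ => expSum x a b s) = 0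
  · exact eq_zero_of_expSum_ofReal_eq_zero hx (congrFun h0)
  · refine absurd ?_ hw
    filter_upwards [h, (analyticOnNhd_expSum_ofReal x a b).ae_ne_zero h0] with s hs hne
    exact not_not.1 (mt hs hne)

end ExpPolynomial

theorem norm_sum_smul_sq {ι E : Type*} [Fintype ι] [NormedAddCommGroup E]
    [InnerProductSpace ℝ E] (v : ι → ℝ) (u : ι → E) :
    ‖∑ p, v p • u p‖ ^ 2 = ∑ p, ∑ q, v p * v q * ⟪u p, u q⟫ := by
  simp_rw [← real_inner_self_eq_norm_sq, sum_inner, inner_sum, real_inner_smul_left,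
    real_inner_smul_right, mul_assoc]

namespace Matrix

variable {ι α E : Type*} [Fintype ι] [MeasurableSpace α] {μ : Measure α}
  [NormedAddCommGroup E] [InnerProductSpace ℝ E] {φ : ι → α → E} {w : α → ℝ}
  {M : Matrix ι ι ℝ}

theorem dotProduct_mulVec_eq_integral_norm_sq
    (hM : ∀ p q, M p q = ∫ s, ⟪φ p s, φ q s⟫ * w s ∂μ)
    (hint : ∀ p q, Integrable (fun s => ⟪φ p s, φ q s⟫ * w s) μ) (v : ι → ℝ) :
    Integrable (fun s => ‖∑ p, v p • φ p s‖ ^ 2 * w s) μ ∧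
      v ⬝ᵥ M *ᵥ v = ∫ s, ‖∑ p, v p • φ p s‖ ^ 2 * w s ∂μ := by
  have hexpand : (fun s => ‖∑ p, v p • φ p s‖ ^ 2 * w s) =
      fun s => ∑ p, ∑ q, v p * v q * (⟪φ p s, φ q s⟫ * w s) := by
    simp_rw [norm_sum_smul_sq, Finset.sum_mul, mul_assoc]
  rw [hexpand]
  refine ⟨integrable_finsetSum _ fun p _ => integrable_finsetSum _ fun q _ =>
    (hint p q).const_mul _, ?_⟩
  rw [integral_finsetSum _ fun p _ => integrable_finsetSum _ fun q _ => (hint p q).const_mul _]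
  refine Finset.sum_congr rfl fun p _ => ?_
  rw [integral_finsetSum _ fun q _ => (hint p q).const_mul _, mulVec, dotProduct, Finset.mul_sum]
  refine Finset.sum_congr rfl fun q _ => ?_
  rw [integral_const_mul, ← hM]
  ring

theorem posDef_of_eq_integral_inner
    (hM : ∀ p q, M p q = ∫ s, ⟪φ p s, φ q s⟫ * w s ∂μ)
    (hint : ∀ p q, Integrable (fun s => ⟪φ p s, φ q s⟫ * w s) μ) (hw : ∀ s, 0 ≤ w s)
    (hind : ∀ v : ι → ℝ, (∀ᵐ s ∂μ, w s ≠ 0 → ∑ p, v p • φ p s = 0) → v = 0) :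
    M.PosDef := by
  refine PosDef.of_dotProduct_mulVec_pos ?_ fun v hv => ?_
  · ext p q
    simp only [conjTranspose_apply, star_trivial, hM, real_inner_comm]
  obtain ⟨hint', hQ⟩ := dotProduct_mulVec_eq_integral_norm_sq hM hint v
  have hnonneg : 0 ≤ fun s => ‖∑ p, v p • φ p s‖ ^ 2 * w s := fun s =>
    mul_nonneg (sq_nonneg _) (hw s)
  rw [star_trivial, hQ]
  refine (integral_nonneg hnonneg).lt_of_ne fun hzero => hv (hind v ?_)
  filter_upwards [(integral_eq_zero_iff_of_nonneg hnonneg hint').1 hzero.symm] with s hs hws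
  simpa [hws] using hs

end Matrix

section JetCovariance

open Complex

variable {ι : Type*} (K : ℝ → ℝ) (x : ι → ℝ)

def jetCovarianceMatrix : Matrix (ι ⊕ ι) (ι ⊕ ι) ℝ :=
  Matrix.fromBlocks
    (Matrix.of fun i j => K (x i - x j))
    (Matrix.of fun i j => -(deriv K (x i - x j)))
    (Matrix.of fun i j => deriv K (x i - x j))
    (Matrix.of fun i j => -(deriv (deriv K) (x i - x j)))

def spectralFeature : ι ⊕ ι → ℝ → ℂ :=
  Sum.elim (fun i s => cexp (x i * s * I)) (fun i s => s * I * cexp (x i * s * I))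

variable {K x}

theorem sum_smul_spectralFeature [Fintype ι] (v : ι ⊕ ι → ℝ) (s : ℝ) :
    ∑ p, v p • spectralFeature x p s = expSum x (v ∘ Sum.inl) (v ∘ Sum.inr) s := by
  simp only [Fintype.sum_sum_type, spectralFeature, Sum.elim_inl, Sum.elim_inr, real_smul,
    expSum, Function.comp_apply, ← Finset.sum_add_distrib]
  exact Finset.sum_congr rfl fun j _ => by ring

theorem inner_spectralFeature (p q : ι ⊕ ι) (s : ℝ) :
    ⟪spectralFeature x p s, spectralFeature x q s⟫ =
      Matrix.fromBlocks
        (Matrix.of fun i j => Real.cos ((x i - x j) * s))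
        (Matrix.of fun i j => s * Real.sin ((x i - x j) * s))
        (Matrix.of fun i j => -(s * Real.sin ((x i - x j) * s)))
        (Matrix.of fun i j => s ^ 2 * Real.cos ((x i - x j) * s)) p q := by
  rcases p with i | i <;> rcases q with j | j <;>
    simp only [spectralFeature, Sum.elim_inl, Sum.elim_inr, Complex.inner, map_mul, conj_ofReal,
      conj_I, conj_re, conj_im, mul_re, mul_im, exp_re, exp_im, ofReal_re, ofReal_im, I_re, I_im,
      neg_re, mul_neg, neg_mul, mul_zero, zero_mul, mul_one, one_mul, sub_self, sub_zero, zero_sub,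
      add_zero, zero_add, neg_zero, neg_sub, sub_neg_eq_add, Real.exp_zero, sub_mul, Real.cos_sub,
      Real.sin_sub, Matrix.fromBlocks_apply₁₁, Matrix.fromBlocks_apply₁₂,
      Matrix.fromBlocks_apply₂₁, Matrix.fromBlocks_apply₂₂, Matrix.of_apply] <;>
    ring

variable {ρ : ℝ → ℝ} (hρ : Integrable ρ) (hρ2 : Integrable fun s => s ^ 2 * ρ s)
  (hK : ∀ d, K d = ∫ s, Real.cos (d * s) * ρ s)
include hρ hρ2 hK

theorem jetCovarianceMatrix_eq_integral_inner (p q : ι ⊕ ι) :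
    Integrable (fun s => ⟪spectralFeature x p s, spectralFeature x q s⟫ * ρ s) ∧
      jetCovarianceMatrix K x p q = ∫ s, ⟪spectralFeature x p s, spectralFeature x q s⟫ * ρ s := by
  have hsin : ∀ u, |-Real.sin u| ≤ 1 := fun u => (abs_neg _).trans_le (Real.abs_sin_le_one u)
  have hcos : ∀ u, |-Real.cos u| ≤ 1 := fun u => (abs_neg _).trans_le (Real.abs_cos_le_one u)
  have hρ1 := hρ.id_mul_of_sq_mul hρ2
  have hρ2' : Integrable fun s => s * (s * ρ s) := by
    simpa only [← mul_assoc, ← pow_two] using hρ2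
  have of_eq : ∀ {F G : ℝ → ℝ}, Integrable G → (∀ s, G s = F s) →
      Integrable F ∧ ∫ s, G s = ∫ s, F s := fun hG h =>
    ⟨hG.congr (ae_of_all _ h), integral_congr_ae (ae_of_all _ h)⟩
  rcases p with i | i <;> rcases q with j | j <;>
    simp only [jetCovarianceMatrix, Matrix.fromBlocks_apply₁₁, Matrix.fromBlocks_apply₁₂,
      Matrix.fromBlocks_apply₂₁, Matrix.fromBlocks_apply₂₂, Matrix.of_apply,
      inner_spectralFeature,
      (hasDerivAt_of_eq_integral_cos hρ hρ2 hK _).deriv,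
      (hasDerivAt_deriv_of_eq_integral_cos hρ hρ2 hK _).deriv, ← integral_neg]
  · exact ⟨integrable_comp_mul_mul Real.continuous_cos Real.abs_cos_le_one hρ _, hK _⟩
  · exact of_eq (integrable_comp_mul_mul Real.continuous_sin.neg hsin hρ1 _).neg
      fun s => by ring
  · exact of_eq (integrable_comp_mul_mul Real.continuous_sin.neg hsin hρ1 _) fun s => by ring
  · exact of_eq (integrable_comp_mul_mul Real.continuous_cos.neg hcos hρ2' _).neg
      fun s => by ring

theorem posDef_jetCovarianceMatrix [Fintype ι] (hx : Function.Injective x)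
    (hρnn : ∀ s, 0 ≤ ρ s) (hρ0 : ¬ ρ =ᵐ[volume] 0) : (jetCovarianceMatrix K x).PosDef := by
  refine Matrix.posDef_of_eq_integral_inner
    (fun p q => (jetCovarianceMatrix_eq_integral_inner hρ hρ2 hK p q).2)
    (fun p q => (jetCovarianceMatrix_eq_integral_inner hρ hρ2 hK p q).1) hρnn fun v hv => ?_
  simp_rw [sum_smul_spectralFeature] at hv
  obtain ⟨ha, hb⟩ := eq_zero_of_ae_expSum_eq_zero hx hρ0 hv
  ext (i | i)
  exacts [congrFun ha i, congrFun hb i]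

end JetCovariance

theorem sgp_nondegenerate_general
    {Ω : Type*} [MeasurableSpace Ω] (P : Measure Ω)
    (f : Ω → ℝ → ℝ) (K : ℝ → ℝ)
    (hsgp : IsSGP P 1 f K) (hsd : HasSpectralDensity 1 K)
    (k : ℕ) (x : Fin k → ℝ) (hx : Function.Injective x) :
    (Matrix.fromBlocks
      (Matrix.of fun i j => K (x i - x j))
      (Matrix.of fun i j => -(deriv K (x i - x j)))
      (Matrix.of fun i j => deriv K (x i - x j))
      (Matrix.of fun i j => -(deriv (deriv K) (x i - x j)))).PosDef := by
  obtain ⟨ρ, hρnn, -, hρ, hK, hρ2⟩ := hsd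
  have hρ0 : ¬ ρ =ᵐ[volume] 0 := fun h0 => hsgp.2.2.2.2.ne' <| by
    rw [hK 0]
    simpa using integral_eq_zero_of_ae h0
  exact posDef_jetCovarianceMatrix hρ (by simpa using hρ2) hK hx hρnn hρ0

/-- non-degeneracy: for a `C¹`-smooth SGP with a spectral density and any
injective tuple of points, the covariance matrix of `(f(x₁),…,f(x_k),f'(x₁),…,f'(x_k))`
is positive definite. -/
theorem sgp_nondegenerate
    {Ω : Type*} [MeasurableSpace Ω] (P : Measure Ω) [IsProbabilityMeasure P]
    (f : Ω → ℝ → ℝ) (K : ℝ → ℝ)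
    (hsgp : IsSGP P 1 f K) (hsd : HasSpectralDensity 1 K)
    (k : ℕ) (x : Fin k → ℝ) (hx : Function.Injective x) :
    (Matrix.fromBlocks
      (Matrix.of fun i j => K (x i - x j))
      (Matrix.of fun i j => -(deriv K (x i - x j)))
      (Matrix.of fun i j => deriv K (x i - x j))
      (Matrix.of fun i j => -(deriv (deriv K) (x i - x j)))).PosDef :=
  sgp_nondegenerate_general P f K hsgp hsd k x hx
end
end

section
/- Let Z be a random variable with law gaussianReal 0 1 (standard Gaussian), and let F : ℝ → ℝ be a measurable function with 0 ≤ F(z) ≤ 1 for all z. Then for every δ ∈ (0,1) and every T > 0, E[F(Z + δ)] ≥ exp(−δ/2)·exp(−T·δ)·E[F(Z)] − ℙ[Z ≤ −T]. -/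
open MeasureTheory ProbabilityTheory Set Filter

noncomputable section

lemma key_pdf_ineq (δ T x : ℝ) (hδ0 : 0 < δ) (hδ1 : δ < 1) (hx : -T ≤ x) :
    Real.exp (-δ / 2) * Real.exp (-T * δ) * gaussianPDFReal 0 1 x ≤ gaussianPDFReal δ 1 x := by
  simp only [gaussianPDFReal, NNReal.coe_one, mul_one, sub_zero]
  rw [mul_comm (Real.exp (-δ / 2) * Real.exp (-T * δ)), mul_assoc]
  gcongr
  rw [← Real.exp_add, ← Real.exp_add, Real.exp_le_exp]
  nlinarith [sq_nonneg δ, mul_le_mul_of_nonneg_right hx hδ0.le]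

/-- Gaussian shift inequality: for a standard Gaussian `Z` and measurable
`F : ℝ → [0,1]`, `E[F(Z+δ)] ≥ e^{-δ/2} e^{-Tδ} E[F(Z)] - P[Z ≤ -T]`. -/
theorem gaussian_shift_inequality
    {Ω : Type*} [MeasurableSpace Ω] (P : Measure Ω) [IsProbabilityMeasure P]
    (Z : Ω → ℝ) (hZ : Measure.map Z P = gaussianReal 0 1)
    (F : ℝ → ℝ) (hF : Measurable F) (hF0 : ∀ z, 0 ≤ F z) (hF1 : ∀ z, F z ≤ 1)
    (δ : ℝ) (hδ : δ ∈ Set.Ioo (0 : ℝ) 1) (T : ℝ) (hT : 0 < T) :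
    Real.exp (-δ / 2) * Real.exp (-T * δ) * (∫ ω, F (Z ω) ∂P)
        - (P {ω | Z ω ≤ -T}).toReal
      ≤ ∫ ω, F (Z ω + δ) ∂P := by
  obtain ⟨hδ0, hδ1⟩ := hδ
  have h1 : (1 : NNReal) ≠ 0 := one_ne_zero
  have hZae : AEMeasurable Z P := by
    by_contra h
    rw [Measure.map_of_not_aemeasurable h] at hZ
    have h2 : (gaussianReal 0 1) Set.univ = 1 := measure_univ
    rw [← hZ] at h2
    simp at h2
  have hpdfint : ∀ μ0 : ℝ, Integrable (fun x => F x * gaussianPDFReal μ0 1 x) := by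
    intro μ0
    refine (integrable_gaussianPDFReal μ0 1).mono
      ((hF.mul (measurable_gaussianPDFReal μ0 1)).aestronglyMeasurable)
      (ae_of_all _ fun x => ?_)
    rw [Real.norm_eq_abs, Real.norm_eq_abs,
      abs_of_nonneg (mul_nonneg (hF0 x) (gaussianPDFReal_nonneg _ _ _)),
      abs_of_nonneg (gaussianPDFReal_nonneg _ _ _)]
    calc F x * gaussianPDFReal μ0 1 x ≤ 1 * gaussianPDFReal μ0 1 x := by
          gcongr
          · exact gaussianPDFReal_nonneg _ _ _
          · exact hF1 x
      _ = _ := one_mul _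
  have hgint : ∀ μ0 : ℝ, ∫ x, F x ∂(gaussianReal μ0 1) = ∫ x, F x * gaussianPDFReal μ0 1 x := by
    intro μ0
    rw [gaussianReal_of_var_ne_zero _ h1]
    have hrfl : gaussianPDF μ0 1 = fun x => ((Real.toNNReal (gaussianPDFReal μ0 1 x) : NNReal) : ENNReal) := rfl
    rw [hrfl, integral_withDensity_eq_integral_smul (measurable_gaussianPDFReal μ0 1).real_toNNReal F]
    congr 1
    ext x
    rw [NNReal.smul_def, smul_eq_mul, Real.coe_toNNReal _ (gaussianPDFReal_nonneg _ _ _), mul_comm]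
  have hEFZ : ∫ ω, F (Z ω) ∂P = ∫ x, F x * gaussianPDFReal 0 1 x := by
    rw [← hgint 0, ← hZ, integral_map hZae hF.aestronglyMeasurable]
  have hEFZδ : ∫ ω, F (Z ω + δ) ∂P = ∫ x, F x * gaussianPDFReal δ 1 x := by
    have hstep : ∫ ω, F (Z ω + δ) ∂P = ∫ x, F (x + δ) ∂(gaussianReal 0 1) := by
      rw [← hZ, integral_map hZae (show AEStronglyMeasurable (fun x => F (x + δ))
        (Measure.map Z P) from (hF.comp (measurable_add_const δ)).aestronglyMeasurable)]
    have hm : Measure.map (· + δ) (gaussianReal 0 1) = gaussianReal δ 1 := by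
      rw [gaussianReal_map_add_const δ, zero_add]
    rw [hstep, ← hgint δ, ← hm,
      integral_map (measurable_add_const δ).aemeasurable hF.aestronglyMeasurable]
  have hP : (P {ω | Z ω ≤ -T}).toReal = ∫ x in Set.Iic (-T), gaussianPDFReal 0 1 x := by
    have hmap : P {ω | Z ω ≤ -T} = (gaussianReal 0 1) (Set.Iic (-T)) := by
      rw [← hZ, Measure.map_apply_of_aemeasurable hZae measurableSet_Iic]
      rfl
    rw [hmap, gaussianReal_apply_eq_integral 0 h1,
      ENNReal.toReal_ofReal (integral_nonneg fun x => gaussianPDFReal_nonneg _ _ _)]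
  have hc0 : (0:ℝ) ≤ Real.exp (-δ / 2) * Real.exp (-T * δ) := by positivity
  have hc1 : Real.exp (-δ / 2) * Real.exp (-T * δ) ≤ 1 := by
    have ha : Real.exp (-δ / 2) ≤ 1 := Real.exp_le_one_iff.mpr (by linarith)
    have hb : Real.exp (-T * δ) ≤ 1 := Real.exp_le_one_iff.mpr (by nlinarith)
    nlinarith [Real.exp_nonneg (-δ / 2), Real.exp_nonneg (-T * δ)]
  have hpt : ∀ x, Real.exp (-δ / 2) * Real.exp (-T * δ) * (F x * gaussianPDFReal 0 1 x)
      - Set.indicator (Set.Iic (-T)) (gaussianPDFReal 0 1) x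
      ≤ F x * gaussianPDFReal δ 1 x := by
    intro x
    rcases le_or_gt x (-T) with hx | hx
    · rw [Set.indicator_of_mem (Set.mem_Iic.mpr hx)]
      have h0 : 0 ≤ F x * gaussianPDFReal δ 1 x :=
        mul_nonneg (hF0 x) (gaussianPDFReal_nonneg _ _ _)
      have h1' : Real.exp (-δ / 2) * Real.exp (-T * δ) * (F x * gaussianPDFReal 0 1 x)
          ≤ gaussianPDFReal 0 1 x := by
        calc Real.exp (-δ / 2) * Real.exp (-T * δ) * (F x * gaussianPDFReal 0 1 x)
            ≤ 1 * (1 * gaussianPDFReal 0 1 x) := by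
              gcongr
              · exact mul_nonneg (hF0 x) (gaussianPDFReal_nonneg _ _ _)
              · exact gaussianPDFReal_nonneg _ _ _
              · exact hF1 x
          _ = gaussianPDFReal 0 1 x := by ring
      linarith
    · rw [Set.indicator_of_notMem (by simpa using hx.not_ge)]
      have hk := key_pdf_ineq δ T x hδ0 hδ1 hx.le
      calc Real.exp (-δ / 2) * Real.exp (-T * δ) * (F x * gaussianPDFReal 0 1 x) - 0
          = F x * (Real.exp (-δ / 2) * Real.exp (-T * δ) * gaussianPDFReal 0 1 x) := by ring
        _ ≤ F x * gaussianPDFReal δ 1 x :=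
            mul_le_mul_of_nonneg_left hk (hF0 x)
  have hindint : Integrable (Set.indicator (Set.Iic (-T)) (gaussianPDFReal 0 1)) :=
    (integrable_gaussianPDFReal 0 1).indicator measurableSet_Iic
  have hL : Integrable (fun x => Real.exp (-δ / 2) * Real.exp (-T * δ)
      * (F x * gaussianPDFReal 0 1 x)
      - Set.indicator (Set.Iic (-T)) (gaussianPDFReal 0 1) x) :=
    ((hpdfint 0).const_mul (Real.exp (-δ / 2) * Real.exp (-T * δ))).sub hindint
  have hmono := integral_mono hL (hpdfint δ) hpt
  rw [integral_sub ((hpdfint 0).const_mul _) hindint, integral_const_mul,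
    integral_indicator measurableSet_Iic] at hmono
  rw [hEFZ, hEFZδ, hP]
  exact hmono
end
end

section
/- Let γ ≥ 0 and let u : ℝ → ℝ be differentiable on [0,1] with u(t) > 0 and |u′(t)| ≤ γ·u(t)³ for all t ∈ [0,1]. If 2·γ·u(0)² ≤ 1/2, then |u(1) − u(0)| ≤ 2·γ·u(0)³. -/
open MeasureTheory ProbabilityTheory Set Filter

noncomputable section

/-- differential inequality step: if `u > 0` is differentiable on `[0,1]`
with `|u'| ≤ γ u³` there, and `2 γ u(0)² ≤ 1/2`, then `|u(1) - u(0)| ≤ 2 γ u(0)³`. -/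
theorem differential_inequality_step
    (γ : ℝ) (hγ : 0 ≤ γ) (u : ℝ → ℝ)
    (hdiff : ∀ t ∈ Set.Icc (0 : ℝ) 1, DifferentiableAt ℝ u t)
    (hpos : ∀ t ∈ Set.Icc (0 : ℝ) 1, 0 < u t)
    (hbound : ∀ t ∈ Set.Icc (0 : ℝ) 1, |deriv u t| ≤ γ * u t ^ 3)
    (hsmall : 2 * γ * u 0 ^ 2 ≤ 1 / 2) :
    |u 1 - u 0| ≤ 2 * γ * u 0 ^ 3 := by
  set f : ℝ → ℝ := fun t => (2 * u t ^ 2)⁻¹ with hf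
  have key : |f 1 - f 0| ≤ γ := by
    have hmvt := Convex.norm_image_sub_le_of_norm_hasDerivWithin_le
      (f := f) (f' := fun t => -(deriv u t) / u t ^ 3) (s := Set.Icc (0:ℝ) 1) (C := γ)
      (fun t ht => by
        have hu : HasDerivAt u (deriv u t) t := (hdiff t ht).hasDerivAt
        have hut := hpos t ht
        have h2 : HasDerivAt (fun s => 2 * u s ^ 2)
            (2 * ((2 : ℕ) * u t ^ 1 * deriv u t)) t := (hu.pow 2).const_mul 2
        have h3 : HasDerivAt f
            (-(2 * ((2 : ℕ) * u t ^ 1 * deriv u t)) / (2 * u t ^ 2) ^ 2) t :=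
          h2.inv (by positivity)
        have heq : -(2 * ((2 : ℕ) * u t ^ 1 * deriv u t)) / (2 * u t ^ 2) ^ 2
            = -(deriv u t) / u t ^ 3 := by
          field_simp
          ring
        rw [heq] at h3
        exact h3.hasDerivWithinAt)
      (fun t ht => by
        have hut := hpos t ht
        have hb := hbound t ht
        rw [Real.norm_eq_abs, abs_div, abs_neg, abs_of_pos (by positivity : (0:ℝ) < u t ^ 3)]
        rw [div_le_iff₀ (by positivity)]
        calc |deriv u t| ≤ γ * u t ^ 3 := hb
          _ = γ * u t ^ 3 := rfl)
      (convex_Icc 0 1)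
      (Set.left_mem_Icc.2 zero_le_one) (Set.right_mem_Icc.2 zero_le_one)
    simpa using hmvt
  have ha : 0 < u 0 := hpos 0 (Set.left_mem_Icc.2 zero_le_one)
  have hb : 0 < u 1 := hpos 1 (Set.right_mem_Icc.2 zero_le_one)
  set a := u 0
  set b := u 1
  have hfab : |(2 * b ^ 2)⁻¹ - (2 * a ^ 2)⁻¹| ≤ γ := key
  rw [abs_le] at hfab
  obtain ⟨h1, h2⟩ := hfab
  -- clear denominators
  have e : (2 * b ^ 2)⁻¹ - (2 * a ^ 2)⁻¹ = (a ^ 2 - b ^ 2) / (2 * a ^ 2 * b ^ 2) := by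
    field_simp
  have hD : (0:ℝ) < 2 * a ^ 2 * b ^ 2 := by positivity
  have hab2 : a ^ 2 - b ^ 2 ≤ 2 * γ * a ^ 2 * b ^ 2 := by
    rw [e, div_le_iff₀ hD] at h2
    nlinarith [h2]
  have hab1 : b ^ 2 - a ^ 2 ≤ 2 * γ * a ^ 2 * b ^ 2 := by
    have h1' := neg_le.mp h1
    rw [e, ← neg_div, neg_sub, div_le_iff₀ hD] at h1'
    nlinarith [h1']
  -- b² ≤ 2 a²
  have hb2 : b ^ 2 ≤ 2 * a ^ 2 := by
    nlinarith [mul_pos ha ha, mul_pos hb hb, sq_nonneg a, sq_nonneg b,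
      mul_le_mul_of_nonneg_right hsmall (sq_nonneg b)]
  rw [abs_le]
  constructor
  · nlinarith [mul_pos ha hb, sq_nonneg (a - b), sq_nonneg (a + b),
      mul_nonneg (mul_nonneg hγ ha.le) (mul_nonneg ha.le (sub_nonneg.2 hb2))]
  · nlinarith [mul_pos ha hb, sq_nonneg (a - b), sq_nonneg (a + b),
      mul_nonneg (mul_nonneg hγ ha.le) (mul_nonneg ha.le (sub_nonneg.2 hb2))]
end
end
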